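/- arXiv:2508.01758 — 2 statements merged into one kernel-verified Lean document; each statement's English description precedes it below -/
import Mathlib

section
/- If two pointed system models (M₁, f₁) and (M₂, f₂) are bisimilar under intervention, then for every ∗-free formula φ of the fragment L(⟨θ⟩), (M₁, f₁) ⊨ φ if and only if (M₂, f₂) ⊨ φ. -/
/-- A system model over component set `C`, atomic propositions `P`,
and behaviour sets `B c`. -/
structure SystemModel (C : Type) (P : Type) (B : C → Type) where
  /-- influence context of each component -/
  Inf : C → Set C
  inf_not_self : ∀ c, c ∉ Inf c
  /-- influence rule of each component -/
  rule : ∀ c : C, B c → ((d : Inf c) → B d.1) → B c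
  /-- valuation of atomic propositions -/
  val : P → Set ((c : C) → B c)

/-- A configuration assigns to each component a behaviour. -/
abbrev Config {C : Type} (B : C → Type) := (c : C) → B c

variable {C P : Type} {B : C → Type}

/-- The transition relation: exactly one component updates by its influence rule. -/
def Step (M : SystemModel C P B) (f f' : Config B) : Prop :=
  ∃ c : C, f' c = M.rule c (f c) (fun d => f d.1) ∧ ∀ d : C, d ≠ c → f' d = f d

/-- An intervention: a target set of components together with new influence
rules (over the same influence contexts) for the targeted components. -/
structure Intervention (M : SystemModel C P B) where
  target : Set C
  newRule : ∀ c : C, c ∈ target → (B c → ((d : M.Inf c) → B d.1) → B c)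

open Classical in
/-- The intervened model: new rules on the target, original rules elsewhere. -/
noncomputable def intervene (M : SystemModel C P B) (θ : Intervention M) :
    SystemModel C P B where
  Inf := M.Inf
  inf_not_self := M.inf_not_self
  rule := fun c => if h : c ∈ θ.target then θ.newRule c h else M.rule c
  val := M.val

/-- `RTheta M M'` : `M'` is obtained from `M` by some intervention. -/
def RTheta (M M' : SystemModel C P B) : Prop :=
  ∃ θ : Intervention M, M' = intervene M θ
/-- Formulas of the ∗-free fragment `L(⟨θ⟩)`. -/
inductive Formula0 (P : Type) where
  | atom : P → Formula0 P
  | neg : Formula0 P → Formula0 P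
  | and : Formula0 P → Formula0 P → Formula0 P
  | box : Formula0 P → Formula0 P
  | dia : Formula0 P → Formula0 P
  | intv : Formula0 P → Formula0 P

/-- Satisfaction for the ∗-free fragment. -/
def Sat0 : SystemModel C P B → Config B → Formula0 P → Prop
  | M, f, .atom p => f ∈ M.val p
  | M, f, .neg φ => ¬ Sat0 M f φ
  | M, f, .and φ ψ => Sat0 M f φ ∧ Sat0 M f ψ
  | M, f, .box φ => ∀ f', Step M f f' → Sat0 M f' φ
  | M, f, .dia φ => ∃ f', Step M f f' ∧ Sat0 M f' φ
  | M, f, .intv φ =>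
      ∃ (θ : Intervention M) (f' : Config B),
        Step (intervene M θ) f f' ∧ Sat0 (intervene M θ) f' φ

/-- A bisimulation under intervention between pointed system models. -/
structure IsBisim
    (Z : SystemModel C P B → Config B → SystemModel C P B → Config B → Prop) :
    Prop where
  atom : ∀ {M₁ f₁ M₂ f₂}, Z M₁ f₁ M₂ f₂ → ∀ p : P, (f₁ ∈ M₁.val p ↔ f₂ ∈ M₂.val p)
  zig : ∀ {M₁ f₁ M₂ f₂}, Z M₁ f₁ M₂ f₂ → ∀ f₁', Step M₁ f₁ f₁' →
      ∃ f₂', Step M₂ f₂ f₂' ∧ Z M₁ f₁' M₂ f₂'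
  zag : ∀ {M₁ f₁ M₂ f₂}, Z M₁ f₁ M₂ f₂ → ∀ f₂', Step M₂ f₂ f₂' →
      ∃ f₁', Step M₁ f₁ f₁' ∧ Z M₁ f₁' M₂ f₂'
  zigT : ∀ {M₁ f₁ M₂ f₂}, Z M₁ f₁ M₂ f₂ → ∀ M₁', RTheta M₁ M₁' →
      ∃ M₂', RTheta M₂ M₂' ∧ Z M₁' f₁ M₂' f₂
  zagT : ∀ {M₁ f₁ M₂ f₂}, Z M₁ f₁ M₂ f₂ → ∀ M₂', RTheta M₂ M₂' →
      ∃ M₁', RTheta M₁ M₁' ∧ Z M₁' f₁ M₂' f₂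

/-- Two pointed system models are bisimilar under intervention. -/
def BisimilarUnderIntervention (M₁ : SystemModel C P B) (f₁ : Config B)
    (M₂ : SystemModel C P B) (f₂ : Config B) : Prop :=
  ∃ Z, IsBisim Z ∧ Z M₁ f₁ M₂ f₂

/-- `C₁, C₂` (covering `C`) form an interface `C₁ ∩ C₂`. -/
structure InterfacePair (M : SystemModel C P B) (C₁ C₂ : Set C) : Prop where
  union_eq : C₁ ∪ C₂ = Set.univ
  left : ∀ c ∈ C₁ \ (C₁ ∩ C₂), M.Inf c ⊆ C₁
  right : ∀ c ∈ C₂ \ (C₁ ∩ C₂), M.Inf c ⊆ C₂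
  inter : ∀ c ∈ C₁ ∩ C₂, M.Inf c ⊆ C₁ ∩ C₂

/-- A system model is interface-admitting if some covering pair of subsets
forms an interface. -/
def InterfaceAdmitting (M : SystemModel C P B) : Prop :=
  ∃ C₁ C₂ : Set C, InterfacePair M C₁ C₂

theorem bisim_key {Z : SystemModel C P B → Config B → SystemModel C P B → Config B → Prop}
    (hZ : IsBisim Z) (φ : Formula0 P) :
    ∀ M₁ f₁ M₂ f₂, Z M₁ f₁ M₂ f₂ → (Sat0 M₁ f₁ φ ↔ Sat0 M₂ f₂ φ) := by
  induction φ with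
  | atom p => intro M₁ f₁ M₂ f₂ h; exact hZ.atom h p
  | neg φ ih => intro M₁ f₁ M₂ f₂ h; exact not_congr (ih _ _ _ _ h)
  | and φ ψ ihφ ihψ => intro M₁ f₁ M₂ f₂ h; exact and_congr (ihφ _ _ _ _ h) (ihψ _ _ _ _ h)
  | box φ ih =>
    intro M₁ f₁ M₂ f₂ h
    constructor
    · intro hs f₂' hstep
      obtain ⟨f₁', hs1, hz⟩ := hZ.zag h f₂' hstep
      exact (ih _ _ _ _ hz).mp (hs f₁' hs1)
    · intro hs f₁' hstep
      obtain ⟨f₂', hs2, hz⟩ := hZ.zig h f₁' hstep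
      exact (ih _ _ _ _ hz).mpr (hs f₂' hs2)
  | dia φ ih =>
    intro M₁ f₁ M₂ f₂ h
    constructor
    · rintro ⟨f₁', hstep, hs⟩
      obtain ⟨f₂', hs2, hz⟩ := hZ.zig h f₁' hstep
      exact ⟨f₂', hs2, (ih _ _ _ _ hz).mp hs⟩
    · rintro ⟨f₂', hstep, hs⟩
      obtain ⟨f₁', hs1, hz⟩ := hZ.zag h f₂' hstep
      exact ⟨f₁', hs1, (ih _ _ _ _ hz).mpr hs⟩
  | intv φ ih =>
    intro M₁ f₁ M₂ f₂ h
    constructor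
    · rintro ⟨θ, f₁', hstep, hs⟩
      obtain ⟨M₂', ⟨θ₂, rfl⟩, hz⟩ := hZ.zigT h (intervene M₁ θ) ⟨θ, rfl⟩
      obtain ⟨f₂', hs2, hz'⟩ := hZ.zig hz f₁' hstep
      exact ⟨θ₂, f₂', hs2, (ih _ _ _ _ hz').mp hs⟩
    · rintro ⟨θ, f₂', hstep, hs⟩
      obtain ⟨M₁', ⟨θ₁, rfl⟩, hz⟩ := hZ.zagT h (intervene M₂ θ) ⟨θ, rfl⟩
      obtain ⟨f₁', hs1, hz'⟩ := hZ.zag hz f₂' hstep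
      exact ⟨θ₁, f₁', hs1, (ih _ _ _ _ hz').mpr hs⟩

/-- **Bisimilarity implies logical equivalence for the ∗-free fragment.**
If two pointed system models are bisimilar under intervention, then they
satisfy exactly the same formulas of `L(⟨θ⟩)`. -/
theorem bisim_implies_logEquiv
    [Fintype C] [∀ c, Nonempty (B c)]
    (M₁ M₂ : SystemModel C P B) (f₁ f₂ : Config B)
    (hbis : BisimilarUnderIntervention M₁ f₁ M₂ f₂) :
    ∀ φ : Formula0 P, Sat0 M₁ f₁ φ ↔ Sat0 M₂ f₂ φ := by
  obtain ⟨Z, hZ, h⟩ := hbis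
  exact fun φ => bisim_key hZ φ M₁ f₁ M₂ f₂ h
end

section
/- Successor matching from logical equivalence: let (M₁, f₁) and (M₂, f₂) be pointed system models over a common finite component set with finite behaviour sets that satisfy exactly the same formulas of the ∗-free fragment L(⟨θ⟩). Then for every configuration f₁' with f₁ Δ_{I₁} f₁' there exists a configuration f₂' with f₂ Δ_{I₂} f₂' such that (M₁, f₁') and (M₂, f₂') satisfy exactly the same formulas of L(⟨θ⟩). -/
variable {C P : Type} {B : C → Type}

/-- Two pointed system models satisfy exactly the same formulas of the
∗-free fragment `L(⟨θ⟩)`. -/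
def LogEquiv (M₁ : SystemModel C P B) (f₁ : Config B)
    (M₂ : SystemModel C P B) (f₂ : Config B) : Prop :=
  ∀ φ : Formula0 P, Sat0 M₁ f₁ φ ↔ Sat0 M₂ f₂ φ

private lemma sat_foldr_and {C P : Type} {B : C → Type}
    (M : SystemModel C P B) (f : Config B) (b : Formula0 P) :
    ∀ l : List (Formula0 P),
      Sat0 M f (l.foldr .and b) ↔ ((∀ ψ ∈ l, Sat0 M f ψ) ∧ Sat0 M f b)
  | [] => by simp
  | ψ :: l => by
      simp [List.foldr, Sat0, sat_foldr_and M f b l]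
      tauto

/-- **Successor matching from logical equivalence.** Over a common finite
component set with finite behaviour sets, every transition successor of `f₁`
in `M₁` is matched by a transition successor of `f₂` in `M₂` that is
logically equivalent to it. -/
theorem successor_matching
    [Fintype C] [∀ c, Fintype (B c)] [∀ c, Nonempty (B c)]
    (M₁ M₂ : SystemModel C P B) (f₁ f₂ : Config B)
    (heq : LogEquiv M₁ f₁ M₂ f₂)
    (f₁' : Config B) (h : Step M₁ f₁ f₁') :
    ∃ f₂', Step M₂ f₂ f₂' ∧ LogEquiv M₁ f₁' M₂ f₂' := by
  classical
  by_contra hcon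
  push_neg at hcon
  -- f₂ has at least one successor
  obtain ⟨c, -, -⟩ := id h
  have hsucc : ∃ g, Step M₂ f₂ g := by
    refine ⟨fun d => if hd : d = c then hd ▸ M₂.rule c (f₂ c) (fun e => f₂ e.1)
        else f₂ d, c, ?_, ?_⟩
    · simp
    · intro d hd; simp [hd]
  -- distinguishing formulas
  have hdist : ∀ g, Step M₂ f₂ g →
      ∃ φ, Sat0 M₁ f₁' φ ∧ ¬ Sat0 M₂ g φ := by
    intro g hg
    have := hcon g hg
    simp only [LogEquiv, not_forall] at this
    obtain ⟨φ, hφ⟩ := this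
    by_cases h1 : Sat0 M₁ f₁' φ
    · exact ⟨φ, h1, fun h2 => hφ ⟨fun _ => h2, fun _ => h1⟩⟩
    · refine ⟨.neg φ, h1, ?_⟩
      intro h2
      exact hφ ⟨fun h3 => absurd h3 h1, fun h3 => absurd h3 h2⟩
  choose χ hχ1 hχ2 using hdist
  -- finite set of successors
  let S : Finset (Config B) := Finset.univ.filter (fun g => Step M₂ f₂ g)
  have hmem : ∀ g, g ∈ S ↔ Step M₂ f₂ g := by
    intro g; simp [S]
  obtain ⟨g₀, hg₀⟩ := hsucc
  let l : List (Formula0 P) := S.toList.attach.map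
    (fun g => χ g.1 ((hmem g.1).1 (Finset.mem_toList.1 g.2)))
  let Φ : Formula0 P := l.foldr .and (χ g₀ hg₀)
  have h1 : Sat0 M₁ f₁ (.dia Φ) := by
    refine ⟨f₁', h, ?_⟩
    rw [sat_foldr_and]
    refine ⟨?_, hχ1 g₀ hg₀⟩
    intro ψ hψ
    simp only [l, List.mem_map] at hψ
    obtain ⟨g, -, rfl⟩ := hψ
    exact hχ1 _ _
  have h2 : Sat0 M₂ f₂ (.dia Φ) := (heq (.dia Φ)).1 h1
  obtain ⟨g, hg, hgΦ⟩ := h2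
  rw [sat_foldr_and] at hgΦ
  have hginS : g ∈ S := (hmem g).2 hg
  have : Sat0 M₂ g (χ g hg) := by
    refine hgΦ.1 _ ?_
    simp only [l, List.mem_map, List.mem_attach, true_and]
    exact ⟨⟨g, Finset.mem_toList.2 hginS⟩, rfl⟩
  exact hχ2 g hg this
end
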